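/- Let S be a closed symmetric operator with non-dense domain in a complex Hilbert space H, set H₀ := closure(dom S) and L := H₀^⊥, and assume S is regular, so that the subspaces L_i := P_{N_i}L ⊆ N_i and L_{−i} := P_{N_{−i}}L ⊆ N_{−i} are closed, where N_{±i} := (ran(S ∓ iI))^⊥ are the deficiency subspaces. Let U : N_i → N_{−i} be a bounded linear map. Then for φ ∈ N_i one has φ − Uφ ∈ H₀ if and only if there exists h ∈ L such that P_{N_i}h = P_{L_i}φ and P_{N_{−i}}h = P_{L_{−i}}(Uφ). (Here P_{L_{±i}} denote the orthogonal projections onto L_{±i}; this says {φ ∈ N_i : (U − I)φ ∈ H₀} = ker(P_{L_{−i}}U − V_iP_{L_i}), where V_i is the isometry of L_i onto L_{−i} determined by V_i(P_{N_i}h) = P_{N_{−i}}h for h ∈ L.) -/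

import Mathlib

/-!
For `h ⊥ dom S` and nonreal `μ = λ̄`, decompose `h = (S - μ) x + P_{N_λ} h` and
`h = (S - μ̄) z + P_{N_λ̄} h`; the ranges are closed since `S` is closed and
`‖(S - μ) x‖ ≥ |Im μ| ‖x‖`. Symmetry of `S` makes `⟪(S - μ) x, (S - μ) y⟫` invariant under
`μ ↦ μ̄`, and both decompositions evaluate it to `⟪h, S y⟫`, so `x = z` and
`P_{N_λ} h - P_{N_λ̄} h = (μ - μ̄) x ∈ dom S`. Hence `⟪g, P_{N_i} h⟫ = ⟪g, P_{N_{-i}} h⟫` for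
`g, h ∈ L`, i.e. `V_i : P_{N_i} h ↦ P_{N_{-i}} h` is a well-defined isometry `L_i → L_{-i}`.
Now `φ - Uφ ∈ H₀ = Lᗮ` means `⟪g, φ⟫ = ⟪g, Uφ⟫` for all `g ∈ L`, which after projecting reads
`⟪P_{N_{-i}} g, V_i P_{L_i} φ - P_{L_{-i}} Uφ⟫ = 0`; since `P_{N_{-i}} g` runs through all of
`L_{-i}`, which contains the right-hand vector, this says `V_i P_{L_i} φ = P_{L_{-i}} Uφ`.
-/

set_option synthInstance.maxHeartbeats 1000000

open scoped ComplexInnerProductSpace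

variable {H : Type*} [NormedAddCommGroup H] [InnerProductSpace ℂ H] [CompleteSpace H]

/-- The compression of an operator `T` in `H` to a closed subspace `K`: the operator in the
Hilbert space `K` with domain `dom T ∩ K` acting as `x ↦ P_K (T x)`. -/
noncomputable def compression (K : Submodule ℂ H) [CompleteSpace K] (T : H →ₗ.[ℂ] H) :
    (↥K) →ₗ.[ℂ] (↥K) where
  domain := T.domain.comap K.subtype
  toFun := (Submodule.orthogonalProjectionOnto K).toLinearMap ∘ₗ T.toFun ∘ₗ
    ((K.subtype.domRestrict (T.domain.comap K.subtype)).codRestrict T.domain fun x => x.2)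

/-- The deficiency subspace `N_λ = (ran (S - λ̄ I))ᗮ` of an operator `S`; in particular
`defSubspace S i = N_i` and `defSubspace S (-i) = N_{-i}`. -/
noncomputable abbrev defSubspace (S : H →ₗ.[ℂ] H) (lam : ℂ) : Submodule ℂ H :=
  (LinearMap.range (S.toFun - (starRingEnd ℂ lam) • S.domain.subtype))ᗮ

section ProjectedSubspaces

open scoped InnerProductSpace

variable {𝕜 E : Type*} [RCLike 𝕜] [NormedAddCommGroup E] [InnerProductSpace 𝕜 E]

lemma inner_eq_inner_orthogonalProjectionOnto_of_eq_map {K L : Submodule 𝕜 E}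
    [K.HasOrthogonalProjection] {M : Submodule 𝕜 K} [M.HasOrthogonalProjection]
    (hM : M = Submodule.map (K.orthogonalProjectionOnto : E →ₗ[𝕜] K) L) {g : E} (hg : g ∈ L)
    (v : K) :
    ⟪g, (v : E)⟫_𝕜 = ⟪K.orthogonalProjectionOnto g, (M.orthogonalProjectionOnto v : K)⟫_𝕜 := by
  have hgM : K.orthogonalProjectionOnto g ∈ M := hM ▸ Submodule.mem_map_of_mem hg
  rw [← Submodule.inner_orthogonalProjectionOnto_eq_of_mem_right,
    ← Submodule.coe_mk (K.orthogonalProjectionOnto g) hgM, ← Submodule.coe_inner,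
    Submodule.inner_orthogonalProjectionOnto_eq_of_mem_left]

variable {L K₁ K₂ : Submodule 𝕜 E} [K₁.HasOrthogonalProjection] [K₂.HasOrthogonalProjection]
  {L₁ : Submodule 𝕜 K₁} [L₁.HasOrthogonalProjection]
  {L₂ : Submodule 𝕜 K₂} [L₂.HasOrthogonalProjection]

theorem sub_mem_orthogonal_iff_exists_orthogonalProjectionOnto_eq
    (hL : ∀ g ∈ L, ∀ h ∈ L, ⟪g, K₁.starProjection h⟫_𝕜 = ⟪g, K₂.starProjection h⟫_𝕜)
    (hL₁ : L₁ = Submodule.map (K₁.orthogonalProjectionOnto : E →ₗ[𝕜] K₁) L)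
    (hL₂ : L₂ = Submodule.map (K₂.orthogonalProjectionOnto : E →ₗ[𝕜] K₂) L)
    (φ : K₁) (ψ : K₂) :
    (φ : E) - ψ ∈ Lᗮ ↔ ∃ h ∈ L,
      K₁.orthogonalProjectionOnto h = (L₁.orthogonalProjectionOnto φ : K₁) ∧
      K₂.orthogonalProjectionOnto h = (L₂.orthogonalProjectionOnto ψ : K₂) := by
  have hinner : ∀ g ∈ L, ∀ h ∈ L,
      K₁.orthogonalProjectionOnto h = (L₁.orthogonalProjectionOnto φ : K₁) →
        ⟪g, (φ : E) - ψ⟫_𝕜 = ⟪K₂.orthogonalProjectionOnto g,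
          K₂.orthogonalProjectionOnto h - (L₂.orthogonalProjectionOnto ψ : K₂)⟫_𝕜 := by
    intro g hg h hh hφ
    rw [inner_sub_right, inner_sub_right,
      inner_eq_inner_orthogonalProjectionOnto_of_eq_map hL₁ hg,
      inner_eq_inner_orthogonalProjectionOnto_of_eq_map hL₂ hg, ← hφ,
      Submodule.inner_orthogonalProjectionOnto_eq_of_mem_right (K := K₁),
      ← Submodule.starProjection_apply, hL g hg h hh, Submodule.starProjection_apply,
      Submodule.inner_orthogonalProjectionOnto_eq_of_mem_right,
      Submodule.inner_orthogonalProjectionOnto_eq_of_mem_right]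
  constructor
  · intro hφψ
    obtain ⟨h, hh, hφ⟩ : (L₁.orthogonalProjectionOnto φ : K₁) ∈
        Submodule.map (K₁.orthogonalProjectionOnto : E →ₗ[𝕜] K₁) L :=
      hL₁ ▸ Submodule.coe_mem _
    refine ⟨h, hh, hφ, sub_eq_zero.1 ((inner_self_eq_zero (𝕜 := 𝕜)).1 ?_)⟩
    obtain ⟨g, hg, hgd⟩ : K₂.orthogonalProjectionOnto h - (L₂.orthogonalProjectionOnto ψ : K₂) ∈
        Submodule.map (K₂.orthogonalProjectionOnto : E →ₗ[𝕜] K₂) L :=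
      hL₂ ▸ L₂.sub_mem (hL₂ ▸ Submodule.mem_map_of_mem hh) (Submodule.coe_mem _)
    rw [ContinuousLinearMap.coe_coe] at hgd
    nth_rw 1 [← hgd]
    rw [← hinner g hg h hh hφ]
    exact Submodule.inner_right_of_mem_orthogonal hg hφψ
  · rintro ⟨h, hh, hφ, hψ⟩
    refine (Submodule.mem_orthogonal _ _).2 fun g hg => ?_
    rw [hinner g hg h hh hφ, hψ, sub_self, inner_zero_right]

end ProjectedSubspaces

section SymmetricOperator

variable {E : Type*} [NormedAddCommGroup E] [InnerProductSpace ℂ E]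

-- `defSubspace S λ` is definitionally `(LinearMap.range (shifted S (conj λ)))ᗮ`.
noncomputable def shifted (S : E →ₗ.[ℂ] E) (μ : ℂ) : S.domain →ₗ[ℂ] E :=
  S.toFun - μ • S.domain.subtype

@[simp]
lemma shifted_apply (S : E →ₗ.[ℂ] E) (μ : ℂ) (x : S.domain) :
    shifted S μ x = S x - μ • (x : E) :=
  rfl

lemma im_inner_self_apply_eq_zero (S : E →ₗ.[ℂ] E)
    (hsym : ∀ x y : S.domain, ⟪S x, (y : E)⟫ = ⟪(x : E), S y⟫) (x : S.domain) :
    (⟪(x : E), S x⟫).im = 0 := by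
  rw [← Complex.conj_eq_iff_im, inner_conj_symm, hsym]

lemma abs_im_mul_norm_le_norm_shifted (S : E →ₗ.[ℂ] E)
    (hsym : ∀ x y : S.domain, ⟪S x, (y : E)⟫ = ⟪(x : E), S y⟫) (μ : ℂ) (x : S.domain) :
    |μ.im| * ‖(x : E)‖ ≤ ‖shifted S μ x‖ := by
  have him : (⟪(x : E), shifted S μ x⟫).im = -(μ.im * ‖(x : E)‖ ^ 2) := by
    rw [shifted_apply, inner_sub_right, inner_smul_right, inner_self_eq_norm_sq_to_K]
    simp [im_inner_self_apply_eq_zero S hsym x, ← Complex.ofReal_pow]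
  have key : |μ.im| * ‖(x : E)‖ * ‖(x : E)‖ ≤ ‖shifted S μ x‖ * ‖(x : E)‖ := by
    calc |μ.im| * ‖(x : E)‖ * ‖(x : E)‖ = |(⟪(x : E), shifted S μ x⟫).im| := by
          rw [him, abs_neg, abs_mul, abs_of_nonneg (sq_nonneg ‖(x : E)‖), sq, mul_assoc]
      _ ≤ ‖⟪(x : E), shifted S μ x⟫‖ := Complex.abs_im_le_norm _
      _ ≤ ‖(x : E)‖ * ‖shifted S μ x‖ := norm_inner_le_norm _ _
      _ = ‖shifted S μ x‖ * ‖(x : E)‖ := mul_comm _ _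
  rcases (norm_nonneg (x : E)).eq_or_lt with hx | hx
  · rw [← hx, mul_zero]
    exact norm_nonneg _
  · exact le_of_mul_le_mul_right key hx

lemma shifted_injective (S : E →ₗ.[ℂ] E)
    (hsym : ∀ x y : S.domain, ⟪S x, (y : E)⟫ = ⟪(x : E), S y⟫) {μ : ℂ} (hμ : μ.im ≠ 0) :
    Function.Injective (shifted S μ) := by
  refine (injective_iff_map_eq_zero _).2 fun x hx => ?_
  have h := abs_im_mul_norm_le_norm_shifted S hsym μ x
  rw [hx, norm_zero] at h
  have : ‖(x : E)‖ = 0 := le_antisymm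
    (nonpos_of_mul_nonpos_right h (abs_pos.2 hμ)) (norm_nonneg _)
  exact Subtype.ext (norm_eq_zero.1 this)

lemma inner_shifted_conj (S : E →ₗ.[ℂ] E)
    (hsym : ∀ x y : S.domain, ⟪S x, (y : E)⟫ = ⟪(x : E), S y⟫) (μ : ℂ) (x y : S.domain) :
    ⟪shifted S (starRingEnd ℂ μ) x, shifted S (starRingEnd ℂ μ) y⟫ =
      ⟪shifted S μ x, shifted S μ y⟫ := by
  simp only [shifted_apply, inner_sub_left, inner_sub_right, inner_smul_left, inner_smul_right,
    Complex.conj_conj, hsym x y]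
  ring

lemma inner_sub_shifted_of_mem_orthogonal (S : E →ₗ.[ℂ] E) {μ : ℂ} {h n : E}
    (hh : h ∈ S.domainᗮ) (hn : n ∈ (LinearMap.range (shifted S μ))ᗮ) (y : S.domain) :
    ⟪h - n, shifted S μ y⟫ = ⟪h, S y⟫ := by
  rw [inner_sub_left, (Submodule.mem_orthogonal' _ _).1 hn _ ⟨y, rfl⟩, sub_zero, shifted_apply,
    inner_sub_right, inner_smul_right, Submodule.inner_left_of_mem_orthogonal y.2 hh, mul_zero,
    sub_zero]

end SymmetricOperator

lemma isClosed_range_shifted (S : H →ₗ.[ℂ] H)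
    (hsym : ∀ x y : S.domain, ⟪S x, (y : H)⟫ = ⟪(x : H), S y⟫) (hclosed : S.IsClosed)
    {μ : ℂ} (hμ : μ.im ≠ 0) :
    IsClosed (LinearMap.range (shifted S μ) : Set H) := by
  have : CompleteSpace S.graph := IsComplete.completeSpace_coe hclosed.isComplete
  let f : S.graph →L[ℂ] H :=
    (ContinuousLinearMap.snd ℂ H H - μ • ContinuousLinearMap.fst ℂ H H) ∘L S.graph.subtypeL
  have hrange : Set.range f = LinearMap.range (shifted S μ) := by
    ext y
    constructor
    · rintro ⟨p, rfl⟩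
      obtain ⟨x, hx₁, hx₂⟩ := S.mem_graph_iff.1 p.2
      exact ⟨x, by simp [f, hx₁, hx₂]⟩
    · rintro ⟨x, rfl⟩
      exact ⟨⟨_, S.mem_graph x⟩, rfl⟩
  have hbound : ∀ p, ‖p‖ ≤ ((1 + ‖μ‖₊) / ‖μ.im‖₊ + 1 : NNReal) * ‖f p‖ := by
    rintro ⟨⟨a, b⟩, hp⟩
    obtain ⟨x, rfl, rfl⟩ := S.mem_graph_iff.1 hp
    change max ‖(x : H)‖ ‖S x‖ ≤ _ * ‖shifted S μ x‖
    have hμ' : 0 < |μ.im| := abs_pos.2 hμ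
    have hx : ‖(x : H)‖ ≤ ‖shifted S μ x‖ / |μ.im| :=
      (le_div_iff₀ hμ').2 (by linarith [abs_im_mul_norm_le_norm_shifted S hsym μ x])
    have hSx : ‖S x‖ ≤ ‖shifted S μ x‖ + ‖μ‖ * ‖(x : H)‖ := by
      rw [← norm_smul, shifted_apply]
      exact norm_le_norm_sub_add _ _
    have hK : ((1 + ‖μ‖₊) / ‖μ.im‖₊ + 1 : NNReal) * ‖shifted S μ x‖ =
        (1 + ‖μ‖) * (‖shifted S μ x‖ / |μ.im|) + ‖shifted S μ x‖ := by
      push_cast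
      rw [Real.norm_eq_abs]
      ring
    rw [hK]
    have := div_nonneg (norm_nonneg (shifted S μ x)) hμ'.le
    refine max_le ?_ ?_ <;> nlinarith [norm_nonneg μ, norm_nonneg (shifted S μ x)]
  rw [← hrange]
  exact (f.antilipschitz_of_bound hbound).isClosed_range f.uniformContinuous

lemma exists_shifted_eq_sub_starProjection (S : H →ₗ.[ℂ] H)
    (hsym : ∀ x y : S.domain, ⟪S x, (y : H)⟫ = ⟪(x : H), S y⟫) (hclosed : S.IsClosed)
    {μ : ℂ} (hμ : μ.im ≠ 0) (h : H) :
    ∃ x, shifted S μ x = h - (LinearMap.range (shifted S μ))ᗮ.starProjection h := by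
  have hmem := (LinearMap.range (shifted S μ))ᗮ.sub_starProjection_mem_orthogonal h
  rwa [Submodule.orthogonal_orthogonal_eq_closure,
    IsClosed.submodule_topologicalClosure_eq (isClosed_range_shifted S hsym hclosed hμ)] at hmem

theorem starProjection_sub_starProjection_mem_domain (S : H →ₗ.[ℂ] H)
    (hsym : ∀ x y : S.domain, ⟪S x, (y : H)⟫ = ⟪(x : H), S y⟫) (hclosed : S.IsClosed)
    {μ : ℂ} (hμ : μ.im ≠ 0) {h : H} (hh : h ∈ S.domainᗮ) :
    (LinearMap.range (shifted S μ))ᗮ.starProjection h -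
      (LinearMap.range (shifted S (starRingEnd ℂ μ)))ᗮ.starProjection h ∈ S.domain := by
  have hμ' : (starRingEnd ℂ μ).im ≠ 0 := by rwa [Complex.conj_im, neg_ne_zero]
  obtain ⟨x, hx⟩ := exists_shifted_eq_sub_starProjection S hsym hclosed hμ h
  obtain ⟨z, hz⟩ := exists_shifted_eq_sub_starProjection S hsym hclosed hμ' h
  have horth : ∀ y, ⟪shifted S μ (x - z), shifted S μ y⟫ = 0 := by
    intro y
    rw [map_sub, inner_sub_left, ← inner_shifted_conj S hsym μ z y, hx, hz,
      inner_sub_shifted_of_mem_orthogonal S hh (Submodule.starProjection_apply_mem _ _),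
      inner_sub_shifted_of_mem_orthogonal S hh (Submodule.starProjection_apply_mem _ _), sub_self]
  have hxz : x = z := by
    have := inner_self_eq_zero.1 (horth (x - z))
    exact sub_eq_zero.1 ((shifted_injective S hsym hμ).eq_iff' (map_zero _) |>.1 this)
  have hdiff : (LinearMap.range (shifted S μ))ᗮ.starProjection h -
      (LinearMap.range (shifted S (starRingEnd ℂ μ)))ᗮ.starProjection h =
        (μ - starRingEnd ℂ μ) • (x : H) := by
    rw [← sub_sub_cancel h (Submodule.starProjection _ h), ← hx,
      ← sub_sub_cancel h (Submodule.starProjection _ h), ← hz, ← hxz, shifted_apply, shifted_apply]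
    module
  rw [hdiff]
  exact S.domain.smul_mem _ x.2

lemma inner_starProjection_defSubspace_eq (S : H →ₗ.[ℂ] H)
    (hsym : ∀ x y : S.domain, ⟪S x, (y : H)⟫ = ⟪(x : H), S y⟫) (hclosed : S.IsClosed)
    {lam : ℂ} (hlam : lam.im ≠ 0) {g h : H} (hg : g ∈ S.domainᗮ) (hh : h ∈ S.domainᗮ) :
    ⟪g, (defSubspace S lam).starProjection h⟫ =
      ⟪g, (defSubspace S (starRingEnd ℂ lam)).starProjection h⟫ := by
  have hmem := starProjection_sub_starProjection_mem_domain S hsym hclosed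
    (μ := starRingEnd ℂ lam) (by rwa [Complex.conj_im, neg_ne_zero]) hh
  rw [← sub_eq_zero, ← inner_sub_right]
  exact Submodule.inner_left_of_mem_orthogonal hmem hg

theorem sub_mem_closure_domain_iff_exists_proj_eq_general
    (S : H →ₗ.[ℂ] H)
    (hsym : ∀ x y : S.domain, ⟪S x, (y : H)⟫ = ⟪(x : H), S y⟫)
    (hclosed : S.IsClosed)
    (U : ↥(defSubspace S Complex.I) →L[ℂ] ↥(defSubspace S (-Complex.I)))
    (Li : Submodule ℂ ↥(defSubspace S Complex.I)) [CompleteSpace Li]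
    (hLi : Li = Submodule.map (Submodule.orthogonalProjectionOnto (defSubspace S Complex.I) :
      H →ₗ[ℂ] ↥(defSubspace S Complex.I)) S.domainᗮ)
    (Lmi : Submodule ℂ ↥(defSubspace S (-Complex.I))) [CompleteSpace Lmi]
    (hLmi : Lmi = Submodule.map (Submodule.orthogonalProjectionOnto (defSubspace S (-Complex.I)) :
      H →ₗ[ℂ] ↥(defSubspace S (-Complex.I))) S.domainᗮ)
    (φ : ↥(defSubspace S Complex.I)) :
    (φ : H) - (U φ : H) ∈ S.domain.topologicalClosure ↔
      ∃ h ∈ S.domainᗮ,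
        Submodule.orthogonalProjectionOnto (defSubspace S Complex.I) h =
          (Submodule.orthogonalProjectionOnto Li φ : ↥(defSubspace S Complex.I)) ∧
        Submodule.orthogonalProjectionOnto (defSubspace S (-Complex.I)) h =
          (Submodule.orthogonalProjectionOnto Lmi (U φ) : ↥(defSubspace S (-Complex.I))) := by
  rw [← Submodule.orthogonal_orthogonal_eq_closure]
  refine sub_mem_orthogonal_iff_exists_orthogonalProjectionOnto_eq (fun g hg h hh => ?_) hLi hLmi φ
    (U φ)
  simpa using inner_starProjection_defSubspace_eq S hsym hclosed (lam := Complex.I) (by simp) hg hh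

/-- Let `S` be a regular closed symmetric operator with non-dense domain,
`H₀ = closure (dom S)`, `L = H₀ᗮ`, and let `L_i = P_{N_i}L`, `L_{-i} = P_{N_{-i}}L` (closed by
regularity).  For a bounded operator `U : N_i → N_{-i}` and `φ ∈ N_i` one has
`φ - Uφ ∈ H₀` iff there exists `h ∈ L` with `P_{N_i} h = P_{L_i} φ` and
`P_{N_{-i}} h = P_{L_{-i}} (Uφ)`. -/
theorem sub_mem_closure_domain_iff_exists_proj_eq
    (S : H →ₗ.[ℂ] H)
    (hsym : ∀ x y : S.domain, ⟪S x, (y : H)⟫ = ⟪(x : H), S y⟫)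
    (hclosed : S.IsClosed)
    (hnd : ¬ Dense (S.domain : Set H))
    (hreg : (compression S.domain.topologicalClosure S).IsClosed)
    (U : ↥(defSubspace S Complex.I) →L[ℂ] ↥(defSubspace S (-Complex.I)))
    (Li : Submodule ℂ ↥(defSubspace S Complex.I)) [CompleteSpace Li]
    (hLi : Li = Submodule.map (Submodule.orthogonalProjectionOnto (defSubspace S Complex.I) :
      H →ₗ[ℂ] ↥(defSubspace S Complex.I)) S.domainᗮ)
    (Lmi : Submodule ℂ ↥(defSubspace S (-Complex.I))) [CompleteSpace Lmi]
    (hLmi : Lmi = Submodule.map (Submodule.orthogonalProjectionOnto (defSubspace S (-Complex.I)) :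
      H →ₗ[ℂ] ↥(defSubspace S (-Complex.I))) S.domainᗮ)
    (φ : ↥(defSubspace S Complex.I)) :
    (φ : H) - (U φ : H) ∈ S.domain.topologicalClosure ↔
      ∃ h ∈ S.domainᗮ,
        Submodule.orthogonalProjectionOnto (defSubspace S Complex.I) h =
          (Submodule.orthogonalProjectionOnto Li φ : ↥(defSubspace S Complex.I)) ∧
        Submodule.orthogonalProjectionOnto (defSubspace S (-Complex.I)) h =
          (Submodule.orthogonalProjectionOnto Lmi (U φ) : ↥(defSubspace S (-Complex.I))) :=
  sub_mem_closure_domain_iff_exists_proj_eq_general S hsym hclosed U Li hLi Lmi hLmi φ
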